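/- Let σ₂ = ⟨(0,1,0),(3,1,0),(6,8,9)⟩ ⊆ ℝ³ (a maximal cone of the dual Newton polyhedron of the hypersurface y³ + xz² − x⁴ = 0). Then the Hilbert basis of σ₂ is exactly { (0,1,0), (3,1,0), (6,8,9), (1,1,0), (2,1,0), (1,1,1), (2,3,3) }; that is, these seven vectors are precisely the irreducible elements of S_{σ₂} = σ₂ ∩ ℤ³, and they generate the monoid S_{σ₂}. -/

import Mathlib

/-!
The cone `σ₂` is cut out by `z ≥ 0`, `2z ≤ 3x` and `x + 2z ≤ 3y`. Below every nonzero lattice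
point `u` of `σ₂` lies one of the seven vectors `g`, in the sense that `u - g ∈ σ₂`: choose `g` on
every facet through `u` and small enough in the other directions. The coordinate `y` is positive
on the seven vectors and nonnegative on `σ₂`, so subtracting repeatedly writes `u` as a sum of
them, and an irreducible `u` must equal its `g`. Conversely, each of the seven vectors is
irreducible by a direct check of the three inequalities.
-/

open scoped BigOperators

/-- The real-coordinate vector attached to an integer vector. -/
def toR {n : ℕ} (u : Fin n → ℤ) : Fin n → ℝ := fun j => (u j : ℝ)

/-- The rational polyhedral cone generated by integer vectors `v 0, …, v (r-1)`:
all nonnegative real linear combinations of the generators. -/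
def coneOf {n r : ℕ} (v : Fin r → (Fin n → ℤ)) : Set (Fin n → ℝ) :=
  { x | ∃ c : Fin r → ℝ, (∀ i, 0 ≤ c i) ∧ x = ∑ i, c i • toR (v i) }

/-- The lattice points of a subset of `ℝⁿ`: `S_σ = σ ∩ ℤⁿ`. -/
def latticePoints {n : ℕ} (σ : Set (Fin n → ℝ)) : Set (Fin n → ℤ) :=
  { u | toR u ∈ σ }

/-- `u` is an irreducible element of `S`: it is a nonzero element of `S` which cannot be
written as the sum of two nonzero elements of `S`. -/
def IsIrreducibleElt {n : ℕ} (S : Set (Fin n → ℤ)) (u : Fin n → ℤ) : Prop :=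
  u ∈ S ∧ u ≠ 0 ∧ ∀ a b : Fin n → ℤ, a ∈ S → b ∈ S → u = a + b → a = 0 ∨ b = 0

/-- The Hilbert basis of (the monoid of lattice points of) a cone:
the set of its irreducible elements. -/
def hilbertBasis {n : ℕ} (S : Set (Fin n → ℤ)) : Set (Fin n → ℤ) :=
  { u | IsIrreducibleElt S u }

theorem hilbertBasis_subset_of_exists_sub_mem {n : ℕ} {S B : Set (Fin n → ℤ)} (hBS : B ⊆ S)
    (hB0 : 0 ∉ B) (hstep : ∀ u ∈ S, u ≠ 0 → ∃ g ∈ B, u - g ∈ S) : hilbertBasis S ⊆ B := by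
  rintro u ⟨huS, hu0, hirr⟩
  obtain ⟨g, hgB, hugS⟩ := hstep u huS hu0
  rcases hirr g (u - g) (hBS hgB) hugS (add_sub_cancel g u).symm with hg | hug
  · exact absurd (hg ▸ hgB) hB0
  · rwa [sub_eq_zero.mp hug]

theorem subset_closure_of_exists_sub_mem {M : Type*} [AddCommGroup M] {S B : Set M}
    (ht : M →+ ℤ) (hS : ∀ u ∈ S, 0 ≤ ht u) (hB : ∀ g ∈ B, 0 < ht g)
    (hstep : ∀ u ∈ S, u ≠ 0 → ∃ g ∈ B, u - g ∈ S) : S ⊆ AddSubmonoid.closure B := by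
  intro u hu
  induction hk : (ht u).toNat using Nat.strong_induction_on generalizing u with
  | _ k ih =>
    by_cases hu0 : u = 0
    · exact hu0 ▸ zero_mem _
    obtain ⟨g, hgB, hugS⟩ := hstep u hu hu0
    have hlt : (ht (u - g)).toNat < k := by
      have := hS _ hugS
      have := hB g hgB
      rw [map_sub] at *
      omega
    simpa using add_mem (AddSubmonoid.subset_closure hgB) (ih _ hlt hugS rfl)

theorem toR_zero {n : ℕ} : toR (0 : Fin n → ℤ) = 0 := by
  ext j
  simp [toR]

theorem toR_add {n : ℕ} (u w : Fin n → ℤ) : toR (u + w) = toR u + toR w := by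
  ext j
  simp [toR]

theorem zero_mem_coneOf {n r : ℕ} (v : Fin r → Fin n → ℤ) : 0 ∈ coneOf v :=
  ⟨0, fun _ => le_rfl, by simp⟩

theorem add_mem_coneOf {n r : ℕ} {v : Fin r → Fin n → ℤ} {x y : Fin n → ℝ}
    (hx : x ∈ coneOf v) (hy : y ∈ coneOf v) : x + y ∈ coneOf v := by
  obtain ⟨c, hc, rfl⟩ := hx
  obtain ⟨d, hd, rfl⟩ := hy
  exact ⟨c + d, fun i => add_nonneg (hc i) (hd i), by simp [add_smul, Finset.sum_add_distrib]⟩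

def latticeSubmonoid {n r : ℕ} (v : Fin r → Fin n → ℤ) : AddSubmonoid (Fin n → ℤ) where
  carrier := latticePoints (coneOf v)
  zero_mem' := show toR 0 ∈ coneOf v from toR_zero ▸ zero_mem_coneOf v
  add_mem' {u w} hu hw := show toR (u + w) ∈ coneOf v from toR_add u w ▸ add_mem_coneOf hu hw

theorem vec3_eq_zero_iff {u : Fin 3 → ℤ} : u = 0 ↔ u 0 = 0 ∧ u 1 = 0 ∧ u 2 = 0 := by
  simp [funext_iff, Fin.forall_fin_succ]

local notation "σ₂" => coneOf ![![0, 1, 0], ![3, 1, 0], ![6, 8, 9]]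

local notation "𝓑₂" => ({![0, 1, 0], ![3, 1, 0], ![6, 8, 9], ![1, 1, 0], ![2, 1, 0], ![1, 1, 1],
  ![2, 3, 3]} : Set (Fin 3 → ℤ))

/-- The facet functionals `z`, `3x - 2z`, `3y - x - 2z` of `σ₂` are dual to the generators
`(6,8,9)`, `(3,1,0)`, `(0,1,0)`, up to the factors `9`, `9`, `3`. -/
theorem mem_latticePoints_sigma2_iff {u : Fin 3 → ℤ} :
    u ∈ latticePoints σ₂ ↔ 0 ≤ u 2 ∧ 2 * u 2 ≤ 3 * u 0 ∧ u 0 + 2 * u 2 ≤ 3 * u 1 := by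
  simp only [latticePoints, coneOf, toR, Set.mem_ofPred_eq, funext_iff, Fin.forall_fin_succ,
    Fin.succ_zero_eq_one, Fin.succ_one_eq_two, IsEmpty.forall_iff, and_true, Fin.sum_univ_three,
    Pi.add_apply, Pi.smul_apply, smul_eq_mul,
    Matrix.cons_val, Int.cast_zero, Int.cast_one, Int.cast_ofNat, mul_zero, mul_one, zero_add,
    add_zero]
  constructor
  · rintro ⟨c, ⟨hc0, hc1, hc2⟩, h0, h1, h2⟩
    refine ⟨?_, ?_, ?_⟩ <;> (rify; linarith)
  · rintro ⟨hz, hxz, hxyz⟩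
    rify at hz hxz hxyz
    refine ⟨![(3 * u 1 - u 0 - 2 * u 2) / 3, (3 * u 0 - 2 * u 2) / 9, u 2 / 9],
      ⟨?_, ?_, ?_⟩, ?_, ?_, ?_⟩ <;>
      simp only [Matrix.cons_val] <;> linarith

theorem one_le_apply_one_of_mem_sigma2Basis {g : Fin 3 → ℤ} (hg : g ∈ 𝓑₂) : 1 ≤ g 1 := by
  rcases hg with rfl | rfl | rfl | rfl | rfl | rfl | rfl <;> simp

theorem exists_mem_sigma2Basis_sub_mem {u : Fin 3 → ℤ} (hu : u ∈ latticePoints σ₂) (hu0 : u ≠ 0) :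
    ∃ g ∈ 𝓑₂, u - g ∈ latticePoints σ₂ := by
  rw [mem_latticePoints_sigma2_iff] at hu
  rw [Ne, vec3_eq_zero_iff] at hu0
  obtain ⟨hz, hxz, hxyz⟩ := hu
  simp only [mem_latticePoints_sigma2_iff, Pi.sub_apply]
  rcases hz.eq_or_lt with hz | hz
  · rcases show u 0 = 0 ∨ u 0 = 1 ∨ u 0 = 2 ∨ 3 ≤ u 0 by omega with hx | hx | hx | hx
    · exact ⟨![0, 1, 0], by simp, by simp only [Matrix.cons_val]; omega⟩
    · exact ⟨![1, 1, 0], by simp, by simp only [Matrix.cons_val]; omega⟩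
    · exact ⟨![2, 1, 0], by simp, by simp only [Matrix.cons_val]; omega⟩
    · exact ⟨![3, 1, 0], by simp, by simp only [Matrix.cons_val]; omega⟩
  rcases hxz.lt_or_eq with hxz | hxz
  · exact ⟨![1, 1, 1], by simp, by simp only [Matrix.cons_val]; omega⟩
  rcases hxyz.lt_or_eq with hxyz | hxyz
  · exact ⟨![2, 3, 3], by simp, by simp only [Matrix.cons_val]; omega⟩
  · exact ⟨![6, 8, 9], by simp, by simp only [Matrix.cons_val]; omega⟩

theorem isIrreducibleElt_of_mem_sigma2Basis {g : Fin 3 → ℤ} (hg : g ∈ 𝓑₂) :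
    IsIrreducibleElt (latticePoints σ₂) g := by
  refine ⟨?_, ?_, ?_⟩
  · rw [mem_latticePoints_sigma2_iff]
    rcases hg with rfl | rfl | rfl | rfl | rfl | rfl | rfl <;> simp
  · have := one_le_apply_one_of_mem_sigma2Basis hg
    rintro rfl
    simp at this
  · intro a b ha hb hab
    rw [mem_latticePoints_sigma2_iff] at ha hb
    rw [vec3_eq_zero_iff, vec3_eq_zero_iff]
    have h0 := congrFun hab 0
    have h1 := congrFun hab 1
    have h2 := congrFun hab 2
    rcases hg with rfl | rfl | rfl | rfl | rfl | rfl | rfl <;>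
      simp only [Pi.add_apply, Matrix.cons_val] at h0 h1 h2 <;> omega

/-- the Hilbert basis of the cone `σ₂ = ⟨(0,1,0),(3,1,0),(6,8,9)⟩` of the
dual Newton polyhedron of `y³ + xz² − x⁴ = 0` is exactly
`{(0,1,0),(3,1,0),(6,8,9),(1,1,0),(2,1,0),(1,1,1),(2,3,3)}`, and these seven vectors
generate the monoid `S_{σ₂} = σ₂ ∩ ℤ³`. -/
theorem elliptic_sigma2_hilbert_basis :
    let S := latticePoints (coneOf ![![0, 1, 0], ![3, 1, 0], ![6, 8, 9]])
    let B : Set (Fin 3 → ℤ) :=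
      {![0, 1, 0], ![3, 1, 0], ![6, 8, 9], ![1, 1, 0], ![2, 1, 0], ![1, 1, 1], ![2, 3, 3]}
    hilbertBasis S = B ∧ (AddSubmonoid.closure B : Set (Fin 3 → ℤ)) = S := by
  intro S B
  have hBS : B ⊆ S := fun g hg => (isIrreducibleElt_of_mem_sigma2Basis hg).1
  have hstep : ∀ u ∈ S, u ≠ 0 → ∃ g ∈ B, u - g ∈ S := fun u hu hu0 =>
    exists_mem_sigma2Basis_sub_mem hu hu0
  have hB0 : (0 : Fin 3 → ℤ) ∉ B := fun h => (isIrreducibleElt_of_mem_sigma2Basis h).2.1 rfl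
  refine ⟨(hilbertBasis_subset_of_exists_sub_mem hBS hB0 hstep).antisymm
    fun g hg => isIrreducibleElt_of_mem_sigma2Basis hg, ?_⟩
  have hclosure_le :
      AddSubmonoid.closure B ≤ latticeSubmonoid ![![0, 1, 0], ![3, 1, 0], ![6, 8, 9]] :=
    AddSubmonoid.closure_le.2 hBS
  have hy_nonneg : ∀ u ∈ S, 0 ≤ u 1 := fun u hu => by
    obtain ⟨hz, hxz, hxyz⟩ := mem_latticePoints_sigma2_iff.1 hu
    omega
  exact Set.Subset.antisymm hclosure_le <|
    subset_closure_of_exists_sub_mem (Pi.evalAddMonoidHom (fun _ => ℤ) 1) hy_nonneg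
      (fun g hg => one_le_apply_one_of_mem_sigma2Basis hg) hstep
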